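/- arXiv:1406.5223 — 3 statements merged into one kernel-verified Lean document; each statement's English description precedes it below -/
import Mathlib

section
/- Let G be a finite simple graph on vertex set V = {1,…,n}, let p ≥ 1, and for each vertex i let A_i be a finite set of anchor indices with positions a_k ∈ ℝ^p (k ∈ A_i). Let d_ij ≥ 0 for each edge i∼j of G and r_ik ≥ 0 for each i and k ∈ A_i. Define f(x) = ∑_{i∼j} ½(‖x_i − x_j‖ − d_ij)² + ∑_i ∑_{k∈A_i} ½(‖x_i − a_k‖ − r_ik)² for x = (x_1,…,x_n) ∈ (ℝ^p)^n, and define g(x, y, w) = ∑_{i∼j} ½‖x_i − x_j − y_ij‖² + ∑_i ∑_{k∈A_i} ½‖x_i − a_k − w_ik‖². Then for every fixed x, the infimum of g(x, y, w) over all (y, w) with ‖y_ij‖ = d_ij for every edge i∼j and ‖w_ik‖ = r_ik for every i, k ∈ A_i equals f(x). -/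
open Classical in
noncomputable def sphBest {p : ℕ} (hp : 1 ≤ p) (t : ℝ) (v : EuclideanSpace ℝ (Fin p)) :
    EuclideanSpace ℝ (Fin p) :=
  if v = 0 then t • (EuclideanSpace.single ⟨0, hp⟩ (1 : ℝ)) else (t / ‖v‖) • v

lemma sphBest_norm {p : ℕ} (hp : 1 ≤ p) {t : ℝ} (ht : 0 ≤ t)
    (v : EuclideanSpace ℝ (Fin p)) : ‖sphBest hp t v‖ = t := by
  classical
  unfold sphBest
  split_ifs with h
  · rw [norm_smul, EuclideanSpace.norm_single]
    simp [abs_of_nonneg ht]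
  · rw [norm_smul, norm_div, Real.norm_eq_abs, abs_of_nonneg ht, norm_norm,
      div_mul_cancel₀ _ (norm_ne_zero_iff.mpr h)]

lemma sphBest_dist {p : ℕ} (hp : 1 ≤ p) {t : ℝ} (ht : 0 ≤ t)
    (v : EuclideanSpace ℝ (Fin p)) : ‖v - sphBest hp t v‖ ^ 2 = (‖v‖ - t) ^ 2 := by
  classical
  unfold sphBest
  split_ifs with h
  · rw [h, zero_sub, norm_neg, norm_smul, EuclideanSpace.norm_single, norm_zero]
    simp [abs_of_nonneg ht]
  · have hv : ‖v‖ ≠ 0 := norm_ne_zero_iff.mpr h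
    have : v - (t / ‖v‖) • v = (1 - t / ‖v‖) • v := by
      rw [sub_smul, one_smul]
    rw [this, norm_smul, Real.norm_eq_abs, mul_pow, sq_abs]
    field_simp

lemma sph_lb {E : Type*} [NormedAddCommGroup E] {t : ℝ} (v u : E) (hu : ‖u‖ = t) :
    (‖v‖ - t) ^ 2 ≤ ‖v - u‖ ^ 2 := by
  rw [← hu, ← sq_abs (‖v‖ - ‖u‖)]
  exact pow_le_pow_left₀ (abs_nonneg _) (abs_norm_sub_norm_le v u) 2

/-- For every fixed configuration `x`, the infimum of the reformulated cost `g(x,y,w)` over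
the product of spheres `‖y_ij‖ = d_ij`, `‖w_ik‖ = r_ik` equals the maximum-likelihood
localization cost `f(x)`. -/
theorem stmt_3 {n p : ℕ} (hp : 1 ≤ p) (G : SimpleGraph (Fin n)) [DecidableRel G.Adj]
    {K : Type*} (A : Fin n → Finset K) (a : K → EuclideanSpace ℝ (Fin p))
    (d : Fin n → Fin n → ℝ) (r : Fin n → K → ℝ)
    (hd : ∀ i j, G.Adj i j → 0 ≤ d i j) (hr : ∀ i, ∀ k ∈ A i, 0 ≤ r i k)
    (x : Fin n → EuclideanSpace ℝ (Fin p)) :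
    sInf {c : ℝ |
        ∃ (y : Fin n → Fin n → EuclideanSpace ℝ (Fin p))
          (w : Fin n → K → EuclideanSpace ℝ (Fin p)),
          (∀ e ∈ Finset.univ.filter (fun e : Fin n × Fin n => e.1 < e.2 ∧ G.Adj e.1 e.2),
              ‖y e.1 e.2‖ = d e.1 e.2) ∧
          (∀ i, ∀ k ∈ A i, ‖w i k‖ = r i k) ∧
          c = (∑ e ∈ Finset.univ.filter
                  (fun e : Fin n × Fin n => e.1 < e.2 ∧ G.Adj e.1 e.2),
                (1 / 2) * ‖x e.1 - x e.2 - y e.1 e.2‖ ^ 2) +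
              ∑ i, ∑ k ∈ A i, (1 / 2) * ‖x i - a k - w i k‖ ^ 2} =
      (∑ e ∈ Finset.univ.filter (fun e : Fin n × Fin n => e.1 < e.2 ∧ G.Adj e.1 e.2),
          (1 / 2) * (‖x e.1 - x e.2‖ - d e.1 e.2) ^ 2) +
        ∑ i, ∑ k ∈ A i, (1 / 2) * (‖x i - a k‖ - r i k) ^ 2 := by
  apply IsLeast.csInf_eq
  constructor
  · -- membership: the optimal (y,w) attains the value
    refine ⟨fun i j => sphBest hp (d i j) (x i - x j),
           fun i k => sphBest hp (r i k) (x i - a k), ?_, ?_, ?_⟩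
    · intro e he
      simp only [Finset.mem_filter] at he
      exact sphBest_norm hp (hd e.1 e.2 he.2.2) _
    · intro i k hk
      exact sphBest_norm hp (hr i k hk) _
    · congr 1
      · refine Finset.sum_congr rfl fun e he => ?_
        simp only [Finset.mem_filter] at he
        rw [sphBest_dist hp (hd e.1 e.2 he.2.2)]
      · refine Finset.sum_congr rfl fun i _ => Finset.sum_congr rfl fun k hk => ?_
        rw [sphBest_dist hp (hr i k hk)]
  · -- lower bound
    rintro c ⟨y, w, hy, hw, rfl⟩
    refine add_le_add (Finset.sum_le_sum fun e he => ?_)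
      (Finset.sum_le_sum fun i _ => Finset.sum_le_sum fun k hk => ?_)
    · exact mul_le_mul_of_nonneg_left (sph_lb _ _ (hy e he)) (by norm_num)
    · exact mul_le_mul_of_nonneg_left (sph_lb _ _ (hw i k hk)) (by norm_num)
end

section
/- With G, p, anchors, measurements d_ij ≥ 0, r_ik ≥ 0, f and g as in the reformulation setup: a point x* ∈ (ℝ^p)^n is a global minimizer of f if and only if there exist y* = (y*_ij) and w* = (w*_ik) with ‖y*_ij‖ = d_ij for every edge and ‖w*_ik‖ = r_ik for every i, k ∈ A_i such that (x*, y*, w*) is a global minimizer of g over the constraint set Z = {(x, y, w) : ‖y_ij‖ = d_ij, ‖w_ik‖ = r_ik}; moreover the optimal values of the two problems coincide. -/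
lemma norm_sub_sq_ge' {p : ℕ} (v y : EuclideanSpace ℝ (Fin p)) {d : ℝ}
    (hy : ‖y‖ = d) : (‖v‖ - d) ^ 2 ≤ ‖v - y‖ ^ 2 := by
  have h := abs_norm_sub_norm_le v y
  rw [hy] at h
  calc (‖v‖ - d) ^ 2 = |‖v‖ - d| ^ 2 := (sq_abs _).symm
    _ ≤ ‖v - y‖ ^ 2 := pow_le_pow_left₀ (abs_nonneg _) h 2

lemma exists_sphere' {p : ℕ} (hp : 1 ≤ p) (v : EuclideanSpace ℝ (Fin p)) {d : ℝ}
    (hd : 0 ≤ d) : ∃ y : EuclideanSpace ℝ (Fin p), ‖y‖ = d ∧ ‖v - y‖ ^ 2 = (‖v‖ - d) ^ 2 := by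
  by_cases hv : v = 0
  · refine ⟨d • EuclideanSpace.single (⟨0, hp⟩ : Fin p) (1 : ℝ), ?_, ?_⟩
    · rw [norm_smul, EuclideanSpace.norm_single]
      simp [abs_of_nonneg hd]
    · rw [hv]
      rw [zero_sub, norm_neg, norm_smul, EuclideanSpace.norm_single]
      simp [abs_of_nonneg hd]
  · have hv' : ‖v‖ ≠ 0 := norm_ne_zero_iff.mpr hv
    refine ⟨(d / ‖v‖) • v, ?_, ?_⟩
    · rw [norm_smul, Real.norm_eq_abs, abs_div, abs_of_nonneg hd, abs_norm, div_mul_cancel₀ _ hv']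
    · have h1 : v - (d / ‖v‖) • v = (1 - d / ‖v‖) • v := by
        rw [sub_smul, one_smul]
      rw [h1, norm_smul, mul_pow, Real.norm_eq_abs, sq_abs]
      field_simp

/-- `x*` is a global minimizer of the maximum-likelihood cost `f` iff it extends to a global
minimizer `(x*, y*, w*)` of the reformulated cost `g` over the product-of-spheres constraint
set `Z`; moreover the two optimal values coincide. -/
theorem stmt_4 {n p : ℕ} (hp : 1 ≤ p) (G : SimpleGraph (Fin n)) [DecidableRel G.Adj]
    {K : Type*} (A : Fin n → Finset K) (a : K → EuclideanSpace ℝ (Fin p))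
    (d : Fin n → Fin n → ℝ) (r : Fin n → K → ℝ)
    (hd : ∀ i j, G.Adj i j → 0 ≤ d i j) (hr : ∀ i, ∀ k ∈ A i, 0 ≤ r i k)
    (xstar : Fin n → EuclideanSpace ℝ (Fin p)) :
    let Es := Finset.univ.filter (fun e : Fin n × Fin n => e.1 < e.2 ∧ G.Adj e.1 e.2)
    let f : (Fin n → EuclideanSpace ℝ (Fin p)) → ℝ := fun x =>
      (∑ e ∈ Es, (1 / 2) * (‖x e.1 - x e.2‖ - d e.1 e.2) ^ 2) +
        ∑ i, ∑ k ∈ A i, (1 / 2) * (‖x i - a k‖ - r i k) ^ 2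
    let g : (Fin n → EuclideanSpace ℝ (Fin p)) →
        (Fin n → Fin n → EuclideanSpace ℝ (Fin p)) →
        (Fin n → K → EuclideanSpace ℝ (Fin p)) → ℝ := fun x y w =>
      (∑ e ∈ Es, (1 / 2) * ‖x e.1 - x e.2 - y e.1 e.2‖ ^ 2) +
        ∑ i, ∑ k ∈ A i, (1 / 2) * ‖x i - a k - w i k‖ ^ 2
    let feas : (Fin n → Fin n → EuclideanSpace ℝ (Fin p)) →
        (Fin n → K → EuclideanSpace ℝ (Fin p)) → Prop := fun y w =>
      (∀ e ∈ Es, ‖y e.1 e.2‖ = d e.1 e.2) ∧ (∀ i, ∀ k ∈ A i, ‖w i k‖ = r i k)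
    ((∀ x, f xstar ≤ f x) ↔
      ∃ y w, feas y w ∧ ∀ x' y' w', feas y' w' → g xstar y w ≤ g x' y' w') ∧
    sInf (Set.range f) = sInf {c : ℝ | ∃ x y w, feas y w ∧ c = g x y w} := by
  intro Es f g feas
  classical
  have key1 : ∀ x y w, feas y w → f x ≤ g x y w := by
    intro x y w hfw
    apply add_le_add
    · apply Finset.sum_le_sum
      intro e he
      have := norm_sub_sq_ge' (x e.1 - x e.2) (y e.1 e.2) (hfw.1 e he)
      linarith
    · apply Finset.sum_le_sum
      intro i _
      apply Finset.sum_le_sum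
      intro k hk
      have := norm_sub_sq_ge' (x i - a k) (w i k) (hfw.2 i k hk)
      linarith
  have key2 : ∀ x, ∃ y w, feas y w ∧ g x y w = f x := by
    intro x
    have hEs : ∀ e : Fin n × Fin n, e ∈ Es → 0 ≤ d e.1 e.2 := by
      intro e he
      exact hd e.1 e.2 (Finset.mem_filter.mp he).2.2
    choose Y hY1 hY2 using fun (e : Fin n × Fin n) (he : e ∈ Es) =>
      exists_sphere' hp (x e.1 - x e.2) (hEs e he)
    choose W hW1 hW2 using fun (i : Fin n) (k : K) (hk : k ∈ A i) =>
      exists_sphere' hp (x i - a k) (hr i k hk)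
    refine ⟨fun i j => if h : ((i, j) : Fin n × Fin n) ∈ Es then Y (i, j) h else 0,
      fun i k => if h : k ∈ A i then W i k h else 0, ⟨?_, ?_⟩, ?_⟩
    · rintro ⟨i, j⟩ he
      simp only at he ⊢
      rw [dif_pos he]
      exact hY1 _ he
    · intro i k hk
      simp only
      rw [dif_pos hk]
      exact hW1 i k hk
    · refine congrArg₂ (· + ·) ?_ ?_
      · refine Finset.sum_congr rfl ?_
        rintro ⟨i, j⟩ he
        simp only
        rw [dif_pos he, hY2 _ he]
      · refine Finset.sum_congr rfl fun i _ => Finset.sum_congr rfl fun k hk => ?_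
        simp only
        rw [dif_pos hk, hW2 i k hk]
  have hfnn : ∀ x, 0 ≤ f x := by
    intro x
    apply add_nonneg
    · exact Finset.sum_nonneg fun e _ => by positivity
    · exact Finset.sum_nonneg fun i _ => Finset.sum_nonneg fun k _ => by positivity
  have hgnn : ∀ x y w, 0 ≤ g x y w := by
    intro x y w
    apply add_nonneg
    · exact Finset.sum_nonneg fun e _ => by positivity
    · exact Finset.sum_nonneg fun i _ => Finset.sum_nonneg fun k _ => by positivity
  constructor
  · constructor
    · intro hmin
      obtain ⟨y, w, hfw, he⟩ := key2 xstar
      exact ⟨y, w, hfw, fun x' y' w' hfw' => by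
        rw [he]; exact le_trans (hmin x') (key1 x' y' w' hfw')⟩
    · rintro ⟨y, w, hfw, hmin⟩ x
      obtain ⟨y2, w2, hfw2, he2⟩ := key2 x
      calc f xstar ≤ g xstar y w := key1 xstar y w hfw
        _ ≤ g x y2 w2 := hmin x y2 w2 hfw2
        _ = f x := he2
  · have hbdd1 : BddBelow (Set.range f) := ⟨0, by rintro b ⟨x, rfl⟩; exact hfnn x⟩
    have hbdd2 : BddBelow {c : ℝ | ∃ x y w, feas y w ∧ c = g x y w} :=
      ⟨0, by rintro b ⟨x, y, w, _, rfl⟩; exact hgnn x y w⟩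
    apply le_antisymm
    · apply le_csInf
      · obtain ⟨y, w, hfw, _⟩ := key2 xstar
        exact ⟨g xstar y w, xstar, y, w, hfw, rfl⟩
      · rintro c ⟨x, y, w, hfw, rfl⟩
        exact le_trans (csInf_le hbdd1 ⟨x, rfl⟩) (key1 x y w hfw)
    · apply le_csInf (Set.range_nonempty f)
      rintro c ⟨x, rfl⟩
      obtain ⟨y, w, hfw, he⟩ := key2 x
      exact csInf_le hbdd2 ⟨x, y, w, hfw, he.symm⟩
end

section
/- Let C be a real matrix (edges × nodes) in which every row has exactly one +1 entry and one −1 entry in distinct columns and zeros elsewhere, with maximum column support size δ_max; let p ≥ 1 and A = C ⊗ I_p. Let σ : R → nodes be a function with multiplicities at most a_max (i.e., #{r : σ(r) = i} ≤ a_max for every node i), and let E be the corresponding selection matrix, taken blockwise with I_p (so E = E₀ ⊗ I_p for the 0–1 matrix E₀ with rows e_{σ(r)}ᵀ). Then for all vectors x, y, w of conforming dimensions: ‖Ax − y‖² + ‖Ex − w‖² ≤ (2δ_max + a_max + 2)·(‖x‖² + ‖y‖² + ‖w‖²). -/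
/-!
Both terms have the form `‖a - y‖²` with `‖a‖² ≤ K ‖x‖²`, and then
`‖a - y‖² ≤ (‖a‖ + ‖y‖)² ≤ (√K ‖x‖ + ‖y‖)² ≤ (K + 1)(‖x‖² + ‖y‖²)` by Cauchy–Schwarz.
Since `C ⊗ I_p` and `E₀ ⊗ I_p` act as `C` and `E₀` on each of the `p` coordinates separately,
it suffices to find `K` for `C` and `E₀`. A row of `C` contributes `(z_i - z_j)² ≤ 2(z_i² + z_j²)`,
a row of `E₀` contributes `z_{σ r}²`; summed over the rows, each `z_v²` is counted once per row
whose support contains `v`, that is at most `δ_max`, resp. `a_max`, times. So `K = 2 δ_max` for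
`A` and `K = a_max` for `E`, and the two bounds add up to the claim.
-/

open Finset Matrix Kronecker

theorem norm_sub_sq_le_of_sq_norm_le {E F : Type*} [SeminormedAddCommGroup E]
    [SeminormedAddCommGroup F] {a y : E} {x : F} {K : ℝ} (hK : 0 ≤ K)
    (ha : ‖a‖ ^ 2 ≤ K * ‖x‖ ^ 2) :
    ‖a - y‖ ^ 2 ≤ (K + 1) * (‖x‖ ^ 2 + ‖y‖ ^ 2) := by
  have ha' : ‖a‖ ≤ √K * ‖x‖ := by
    rw [← Real.sqrt_sq (norm_nonneg a), ← Real.sqrt_sq (norm_nonneg x), ← Real.sqrt_mul hK]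
    exact Real.sqrt_le_sqrt ha
  have hs : √K ^ 2 = K := Real.sq_sqrt hK
  calc ‖a - y‖ ^ 2 ≤ (√K * ‖x‖ + ‖y‖) ^ 2 := by
        gcongr
        exact (norm_sub_le a y).trans (by gcongr)
    _ ≤ (√K ^ 2 + 1) * (‖x‖ ^ 2 + ‖y‖ ^ 2) := by nlinarith [sq_nonneg (‖x‖ - √K * ‖y‖)]
    _ = (K + 1) * (‖x‖ ^ 2 + ‖y‖ ^ 2) := by rw [hs]

namespace Matrix

theorem kronecker_one_mulVec_apply {R V ι : Type*} [Fintype V] [Fintype ι] [DecidableEq ι]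
    (M : Matrix R V ℝ) (x : V × ι → ℝ) (r : R) (t : ι) :
    ((M ⊗ₖ (1 : Matrix ι ι ℝ)) *ᵥ x) (r, t) = (M *ᵥ fun v => x (v, t)) r := by
  simp [mulVec, dotProduct, Fintype.sum_prod_type, one_apply]

theorem sum_sq_kronecker_one_mulVec_le {R V ι : Type*} [Fintype R] [Fintype V] [Fintype ι]
    [DecidableEq ι] {M : Matrix R V ℝ} {K : ℝ}
    (hM : ∀ z : V → ℝ, ∑ r, (M *ᵥ z) r ^ 2 ≤ K * ∑ v, z v ^ 2) (x : V × ι → ℝ) :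
    ∑ rt, ((M ⊗ₖ (1 : Matrix ι ι ℝ)) *ᵥ x) rt ^ 2 ≤ K * ∑ vt, x vt ^ 2 := by
  rw [Fintype.sum_prod_type_right, Fintype.sum_prod_type_right, mul_sum]
  exact sum_le_sum fun t _ => by simpa only [kronecker_one_mulVec_apply] using hM _

variable {R V : Type*} [Fintype V] {C : Matrix R V ℝ} {r : R} {i j : V}

theorem mulVec_apply_eq_sub_of_incidence_row (hij : i ≠ j) (hi : C r i = 1) (hj : C r j = -1)
    (h0 : ∀ k, k ≠ i → k ≠ j → C r k = 0) (z : V → ℝ) :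
    (C *ᵥ z) r = z i - z j := by
  rw [mulVec, dotProduct, Fintype.sum_eq_add i j hij fun k hk => by simp [h0 k hk.1 hk.2], hi, hj]
  ring

theorem sum_filter_ne_zero_of_incidence_row (hij : i ≠ j) (hi : C r i = 1) (hj : C r j = -1)
    (h0 : ∀ k, k ≠ i → k ≠ j → C r k = 0) (g : V → ℝ) :
    ∑ v with C r v ≠ 0, g v = g i + g j := by
  rw [sum_filter, Fintype.sum_eq_add i j hij fun k hk => by simp [h0 k hk.1 hk.2]]
  simp [hi, hj]

theorem sum_sq_mulVec_le_of_colSupport_card_le {ρ : Type*} [Fintype ρ] (M : Matrix ρ V ℝ)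
    {z : V → ℝ} {c : ℝ} (hc : 0 ≤ c) {d : ℕ}
    (hrow : ∀ r, (M *ᵥ z) r ^ 2 ≤ c * ∑ v with M r v ≠ 0, z v ^ 2)
    (hcol : ∀ v, #{r | M r v ≠ 0} ≤ d) :
    ∑ r, (M *ᵥ z) r ^ 2 ≤ c * d * ∑ v, z v ^ 2 := by
  calc ∑ r, (M *ᵥ z) r ^ 2 ≤ c * ∑ r, ∑ v with M r v ≠ 0, z v ^ 2 := by
        rw [mul_sum]; exact sum_le_sum fun r _ => hrow r
    _ = c * ∑ v, (#{r | M r v ≠ 0} : ℝ) * z v ^ 2 := by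
        rw [sum_comm' (t' := univ) (s' := fun v => {r | M r v ≠ 0}) (by simp)]
        simp [sum_const]
    _ ≤ c * ∑ v, (d : ℝ) * z v ^ 2 := by
        gcongr with v
        exact_mod_cast hcol v
    _ = c * d * ∑ v, z v ^ 2 := by rw [mul_assoc, ← mul_sum]

theorem sum_sq_incidence_mulVec_le [Fintype R]
    (hC : ∀ r : R, ∃ i j : V, i ≠ j ∧ C r i = 1 ∧ C r j = -1 ∧
      ∀ k : V, k ≠ i → k ≠ j → C r k = 0)
    {δ : ℕ} (hδ : ∀ v, #{r | C r v ≠ 0} ≤ δ) (z : V → ℝ) :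
    ∑ r, (C *ᵥ z) r ^ 2 ≤ 2 * δ * ∑ v, z v ^ 2 := by
  refine sum_sq_mulVec_le_of_colSupport_card_le C zero_le_two (fun r => ?_) hδ
  obtain ⟨i, j, hij, hi, hj, h0⟩ := hC r
  rw [mulVec_apply_eq_sub_of_incidence_row hij hi hj h0,
    sum_filter_ne_zero_of_incidence_row hij hi hj h0]
  nlinarith [sq_nonneg (z i + z j)]

theorem sum_sq_selection_mulVec_le [DecidableEq V] [Fintype R] {σ : R → V} {a : ℕ}
    (hσ : ∀ v, #{r | σ r = v} ≤ a) (z : V → ℝ) :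
    ∑ r, ((of fun r v => if v = σ r then (1 : ℝ) else 0) *ᵥ z) r ^ 2 ≤ a * ∑ v, z v ^ 2 := by
  simpa using sum_sq_mulVec_le_of_colSupport_card_le
    (of fun r v => if v = σ r then (1 : ℝ) else 0) zero_le_one (z := z)
    (fun r => by simp [mulVec, dotProduct, filter_eq']) (fun v => by simpa [eq_comm] using hσ v)

end Matrix

theorem stmt_15_general {R V S : Type*} [Fintype R] [Fintype V] [Fintype S] [DecidableEq V]
    {p : ℕ} (C : Matrix R V ℝ)
    (hC : ∀ r : R, ∃ i j : V, i ≠ j ∧ C r i = 1 ∧ C r j = -1 ∧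
      ∀ k : V, k ≠ i → k ≠ j → C r k = 0)
    (σ : S → V) (amax : ℕ)
    (hσ : ∀ i : V, (Finset.univ.filter fun r : S => σ r = i).card ≤ amax) :
    let δmax : ℕ := Finset.univ.sup fun i : V =>
      (Finset.univ.filter fun r : R => C r i ≠ 0).card
    let A : Matrix (R × Fin p) (V × Fin p) ℝ := C ⊗ₖ (1 : Matrix (Fin p) (Fin p) ℝ)
    let E : Matrix (S × Fin p) (V × Fin p) ℝ :=
      (Matrix.of fun r c => if c = σ r then (1 : ℝ) else 0) ⊗ₖ (1 : Matrix (Fin p) (Fin p) ℝ)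
    ∀ (x : EuclideanSpace ℝ (V × Fin p)) (y : EuclideanSpace ℝ (R × Fin p))
      (w : EuclideanSpace ℝ (S × Fin p)),
      ‖(WithLp.equiv 2 (R × Fin p → ℝ)).symm (A.mulVec x) - y‖ ^ 2 +
          ‖(WithLp.equiv 2 (S × Fin p → ℝ)).symm (E.mulVec x) - w‖ ^ 2 ≤
        (2 * (δmax : ℝ) + (amax : ℝ) + 2) * (‖x‖ ^ 2 + ‖y‖ ^ 2 + ‖w‖ ^ 2) := by
  intro δmax A E x y w
  have hδ : ∀ v, #{r | C r v ≠ 0} ≤ δmax := fun v =>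
    le_sup (f := fun i => #{r | C r i ≠ 0}) (mem_univ v)
  have hA : ‖(WithLp.equiv 2 (R × Fin p → ℝ)).symm (A *ᵥ x)‖ ^ 2 ≤ 2 * δmax * ‖x‖ ^ 2 := by
    simp only [EuclideanSpace.real_norm_sq_eq]
    exact sum_sq_kronecker_one_mulVec_le (sum_sq_incidence_mulVec_le hC hδ) x
  have hE : ‖(WithLp.equiv 2 (S × Fin p → ℝ)).symm (E *ᵥ x)‖ ^ 2 ≤ amax * ‖x‖ ^ 2 := by
    simp only [EuclideanSpace.real_norm_sq_eq]
    exact sum_sq_kronecker_one_mulVec_le (sum_sq_selection_mulVec_le hσ) x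
  have hAy := norm_sub_sq_le_of_sq_norm_le (y := y) (by positivity) hA
  have hEw := norm_sub_sq_le_of_sq_norm_le (y := w) (by positivity) hE
  have hay : 0 ≤ (amax + 1 : ℝ) * ‖y‖ ^ 2 := by positivity
  have hδw : 0 ≤ (2 * δmax + 1 : ℝ) * ‖w‖ ^ 2 := by positivity
  linear_combination hAy + hEw + hay + hδw

/-- The paper's Lipschitz-constant bound: with `A = C ⊗ I_p` for an incidence matrix `C` of
maximum column support `δ_max`, and `E = E₀ ⊗ I_p` for a selection matrix `E₀` with
multiplicities at most `a_max`, one has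
`‖Ax − y‖² + ‖Ex − w‖² ≤ (2δ_max + a_max + 2)(‖x‖² + ‖y‖² + ‖w‖²)`. -/
theorem stmt_15 {R V S : Type*} [Fintype R] [Fintype V] [Fintype S] [DecidableEq V]
    {p : ℕ} (hp : 1 ≤ p) (C : Matrix R V ℝ)
    (hC : ∀ r : R, ∃ i j : V, i ≠ j ∧ C r i = 1 ∧ C r j = -1 ∧
      ∀ k : V, k ≠ i → k ≠ j → C r k = 0)
    (σ : S → V) (amax : ℕ)
    (hσ : ∀ i : V, (Finset.univ.filter fun r : S => σ r = i).card ≤ amax) :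
    let δmax : ℕ := Finset.univ.sup fun i : V =>
      (Finset.univ.filter fun r : R => C r i ≠ 0).card
    let A : Matrix (R × Fin p) (V × Fin p) ℝ := C ⊗ₖ (1 : Matrix (Fin p) (Fin p) ℝ)
    let E : Matrix (S × Fin p) (V × Fin p) ℝ :=
      (Matrix.of fun r c => if c = σ r then (1 : ℝ) else 0) ⊗ₖ (1 : Matrix (Fin p) (Fin p) ℝ)
    ∀ (x : EuclideanSpace ℝ (V × Fin p)) (y : EuclideanSpace ℝ (R × Fin p))
      (w : EuclideanSpace ℝ (S × Fin p)),
      ‖(WithLp.equiv 2 (R × Fin p → ℝ)).symm (A.mulVec x) - y‖ ^ 2 +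
          ‖(WithLp.equiv 2 (S × Fin p → ℝ)).symm (E.mulVec x) - w‖ ^ 2 ≤
        (2 * (δmax : ℝ) + (amax : ℝ) + 2) * (‖x‖ ^ 2 + ‖y‖ ^ 2 + ‖w‖ ^ 2) :=
  stmt_15_general C hC σ amax hσ
end
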